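/- arXiv:2605.30955 — 3 statements merged into one kernel-verified Lean document; each statement's English description precedes it below -/
import Mathlib

section
/- Let E, A be n × n real matrices with E singular but the pencil λE + A regular (i.e., det(λE + A) is not identically zero as a polynomial in λ). Then there exist invertible matrices P and Q such that P E Q = diag(I_d, N) and P A Q = diag(J, I_{n-d}) in block form, where N is nilpotent. Consequently the linear DAE E z' + A z = 0 decouples into a differential part x' = -J x and a purely algebraic part N w' + w = 0, whose only solution is w = 0. -/
open Module LinearMap Matrix

lemma fitting_matrix (n : ℕ) (M : Matrix (Fin n) (Fin n) ℝ) :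
    ∃ d e : ℕ, ∃ _ : d + e = n,
      ∃ (S : Matrix (Fin n) (Fin d ⊕ Fin e) ℝ) (S' : Matrix (Fin d ⊕ Fin e) (Fin n) ℝ)
        (C : Matrix (Fin d) (Fin d) ℝ) (N : Matrix (Fin e) (Fin e) ℝ),
        S * S' = 1 ∧ S' * S = 1 ∧ IsUnit C ∧ IsNilpotent N ∧
        S' * M * S = Matrix.fromBlocks C 0 0 N := by
  classical
  set s := Pi.basisFun ℝ (Fin n) with hs
  set φ := Matrix.toLin s s M with hφ
  obtain ⟨a, ha⟩ := Filter.eventually_atTop.mp φ.eventually_isCompl_ker_pow_range_pow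
  set k := max a 1 with hkdef
  have hcompl : IsCompl (LinearMap.ker (φ ^ k)) (LinearMap.range (φ ^ k)) :=
    ha k (le_max_left _ _)
  have hk1 : 1 ≤ k := le_max_right _ _
  set V := LinearMap.ker (φ ^ k) with hV
  set W := LinearMap.range (φ ^ k) with hW
  have hcomm : ∀ x, (φ ^ k) (φ x) = φ ((φ ^ k) x) := by
    intro x
    rw [← Module.End.mul_apply, ← Module.End.mul_apply, ← pow_succ, ← pow_succ']
  have hφV : ∀ x ∈ V, φ x ∈ V := by
    intro x hx
    rw [hV, LinearMap.mem_ker] at hx ⊢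
    rw [hcomm, hx, map_zero]
  have hφW : ∀ x ∈ W, φ x ∈ W := by
    rintro x ⟨y, rfl⟩
    exact ⟨φ y, hcomm y⟩
  set F := φ.restrict hφV with hF
  set G := φ.restrict hφW with hG
  have hFnil : IsNilpotent F := by
    refine ⟨k, ?_⟩
    rw [hF, Module.End.pow_restrict]
    ext x
    simpa [LinearMap.restrict_coe_apply] using LinearMap.mem_ker.mp x.2
  have hGunit : IsUnit G := by
    rw [LinearMap.isUnit_iff_ker_eq_bot]
    rw [LinearMap.ker_eq_bot']
    intro x hx
    have hx1 : φ (x : Fin n → ℝ) = 0 := by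
      have := congrArg (Subtype.val) hx
      simpa [hG, LinearMap.restrict_coe_apply] using this
    have hxV : (x : Fin n → ℝ) ∈ V := by
      rw [hV, LinearMap.mem_ker, ← pow_sub_one_mul (Nat.one_le_iff_ne_zero.mp hk1) φ,
        Module.End.mul_apply, hx1, map_zero]
    have : (x : Fin n → ℝ) ∈ V ⊓ W := ⟨hxV, x.2⟩
    rw [hcompl.inf_eq_bot, Submodule.mem_bot] at this
    exact Subtype.ext this
  refine ⟨finrank ℝ W, finrank ℝ V, ?_, ?_⟩
  · rw [Submodule.finrank_add_eq_of_isCompl hcompl.symm, Module.finrank_fin_fun]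
  set bW := Module.finBasis ℝ W with hbW
  set bV := Module.finBasis ℝ V with hbV
  set c := bW.prod bV with hc
  set eqv := Submodule.prodEquivOfIsCompl W V hcompl.symm with heqv
  set b := c.map eqv with hb
  have hψ : G.prodMap F = eqv.symm.conj φ := by
    apply c.ext
    simp only [Basis.prod_apply, coe_inl, coe_inr, prodMap_apply, LinearEquiv.conj_apply,
      LinearEquiv.symm_symm, Submodule.coe_prodEquivOfIsCompl, coe_comp, LinearEquiv.coe_coe,
      Function.comp_apply, coprod_apply, Submodule.coe_subtype, map_add, Sum.forall, Sum.elim_inl,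
      map_zero, ZeroMemClass.coe_zero, add_zero, LinearEquiv.eq_symm_apply, and_self,
      Submodule.coe_prodEquivOfIsCompl', restrict_coe_apply, implies_true, Sum.elim_inr, zero_add,
      heqv, hG, hF, hc]
  have hM' : LinearMap.toMatrix b b φ =
      Matrix.fromBlocks (LinearMap.toMatrix bW bW G) 0 0 (LinearMap.toMatrix bV bV F) := by
    have h1 : LinearMap.toMatrix b b φ = LinearMap.toMatrix c c (eqv.symm.conj φ) := by
      ext i j
      simp [LinearMap.toMatrix_apply, hb, Basis.map_apply, Basis.map_repr,
        LinearEquiv.conj_apply]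
    rw [h1, ← hψ, LinearMap.toMatrix_prodMap]
  refine ⟨s.toMatrix b, b.toMatrix s, LinearMap.toMatrix bW bW G, LinearMap.toMatrix bV bV F,
    Basis.toMatrix_mul_toMatrix_flip s b, Basis.toMatrix_mul_toMatrix_flip b s, ?_, ?_, ?_⟩
  · rw [Matrix.isUnit_iff_isUnit_det, LinearMap.det_toMatrix]
    exact hGunit.map LinearMap.det
  · obtain ⟨m, hm⟩ := hFnil
    exact ⟨m, by rw [LinearMap.toMatrix_pow, hm]; exact (LinearMap.toMatrix bV bV).map_zero⟩
  · have hMt : s.toMatrix b * LinearMap.toMatrix b b φ * b.toMatrix s = M := by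
      rw [basis_toMatrix_mul_linearMap_toMatrix_mul_basis_toMatrix, hφ, LinearMap.toMatrix_toLin]
    rw [← hM', ← hMt]
    simp only [← Matrix.mul_assoc]
    rw [Basis.toMatrix_mul_toMatrix_flip b s, Matrix.one_mul, Matrix.mul_assoc,
      Basis.toMatrix_mul_toMatrix_flip b s, Matrix.mul_one]
lemma nilpotent_ode_trivial {e : ℕ} (N : Matrix (Fin e) (Fin e) ℝ) (hN : IsNilpotent N)
    (w : ℝ → Fin e → ℝ) (hw : ContDiff ℝ (⊤ : ℕ∞) w)
    (heq : ∀ t, N.mulVec (deriv w t) + w t = 0) : w = 0 := by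
  obtain ⟨k, hk⟩ := hN
  have L := (Matrix.mulVecLin N).toContinuousLinearMap
  have key : ∀ (j : ℕ) (t : ℝ), deriv^[j] w t = -(N.mulVec (deriv^[j+1] w t)) := by
    intro j
    induction j with
    | zero =>
      intro t
      simp only [Function.iterate_one, Function.iterate_zero_apply, zero_add]
      exact eq_neg_of_add_eq_zero_right (heq t)
    | succ j ih =>
      intro t
      have hrw : deriv^[j] w = fun s => -(N.mulVec (deriv^[j+1] w s)) := funext ih
      have hg : Differentiable ℝ (deriv^[j+1] w) :=
        ((hw.of_le (by simp) : ContDiff ℝ (⊤:ℕ∞) w).iterate_deriv (j+1)).differentiable (by simp)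
      have hD : HasDerivAt (fun s => -(N.mulVec (deriv^[j+1] w s)))
          (-(N.mulVec (deriv (deriv^[j+1] w) t))) t := by
        have h1 : HasDerivAt (fun s => (Matrix.mulVecLin N).toContinuousLinearMap
            (deriv^[j+1] w s))
            ((Matrix.mulVecLin N).toContinuousLinearMap (deriv (deriv^[j+1] w) t)) t :=
          ((Matrix.mulVecLin N).toContinuousLinearMap.hasFDerivAt.comp_hasDerivAt t
            (hg t).hasDerivAt)
        simpa [Pi.neg_def] using h1.neg
      have h2 : deriv^[j+1] w t = deriv (deriv^[j] w) t := by
        rw [Function.iterate_succ_apply']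
      rw [h2, hrw, hD.deriv, ← Function.iterate_succ_apply' deriv (j+1)]
  have key2 : ∀ (j : ℕ) (t : ℝ), w t = ((-1:ℝ)^j) • (N^j).mulVec (deriv^[j] w t) := by
    intro j
    induction j with
    | zero => intro t; simp
    | succ j ih =>
      intro t
      rw [ih t, key j t, Matrix.mulVec_neg, Matrix.mulVec_mulVec, smul_neg, ← neg_smul,
        show ((-1:ℝ))^(j+1) = -(-1:ℝ)^j by ring, pow_succ N j]
  funext t
  have := key2 k t
  rw [hk] at this
  simpa using this

/-- Weierstrass–Kronecker canonical form of a regular matrix pencil `λE + A`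
with `E` singular: there are invertible `P`, `Q` with `P E Q = diag(I_d, N)`
(`N` nilpotent) and `P A Q = diag(J, I)`. Consequently the algebraic part
`N w' + w = 0` has only the trivial solution `w = 0`. -/
theorem weierstrass_kronecker_form (n : ℕ)
    (E A : Matrix (Fin n) (Fin n) ℝ)
    (hE : ¬ IsUnit E)
    (hreg : ∃ lam : ℝ, IsUnit (lam • E + A)) :
    ∃ d e : ℕ, ∃ h : d + e = n,
      ∃ P Q : Matrix (Fin n) (Fin n) ℝ, IsUnit P ∧ IsUnit Q ∧
        ∃ J : Matrix (Fin d) (Fin d) ℝ, ∃ N : Matrix (Fin e) (Fin e) ℝ,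
          IsNilpotent N ∧
          P * E * Q = Matrix.reindex (finSumFinEquiv.trans (finCongr h))
            (finSumFinEquiv.trans (finCongr h)) (Matrix.fromBlocks 1 0 0 N) ∧
          P * A * Q = Matrix.reindex (finSumFinEquiv.trans (finCongr h))
            (finSumFinEquiv.trans (finCongr h)) (Matrix.fromBlocks J 0 0 1) ∧
          (∀ w : ℝ → Fin e → ℝ, ContDiff ℝ (⊤ : ℕ∞) w →
            (∀ t, N.mulVec (deriv w t) + w t = 0) → w = 0) := by
  classical
  obtain ⟨lam, hB⟩ := hreg
  set B := lam • E + A with hBdef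
  have hdetB : IsUnit B.det := (Matrix.isUnit_iff_isUnit_det B).mp hB
  have hB1 : B⁻¹ * B = 1 := Matrix.nonsing_inv_mul B hdetB
  have hB2 : B * B⁻¹ = 1 := Matrix.mul_nonsing_inv B hdetB
  obtain ⟨d, e, h, S, S', C, N0, hSS', hS'S, hC, hN0, hblock⟩ := fitting_matrix n (B⁻¹ * E)
  refine ⟨d, e, h, ?_⟩
  set eqv : (Fin d ⊕ Fin e) ≃ Fin n := finSumFinEquiv.trans (finCongr h) with heqv
  have hdetC : IsUnit C.det := (Matrix.isUnit_iff_isUnit_det C).mp hC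
  have hC1 : C⁻¹ * C = 1 := Matrix.nonsing_inv_mul C hdetC
  have hC2 : C * C⁻¹ = 1 := Matrix.mul_nonsing_inv C hdetC
  set U : Matrix (Fin e) (Fin e) ℝ := 1 - lam • N0 with hUdef
  have hlamnil : IsNilpotent (lam • N0) := by
    obtain ⟨m, hm⟩ := hN0
    exact ⟨m, by rw [smul_pow, hm, smul_zero]⟩
  have hUunit : IsUnit U := hlamnil.isUnit_one_sub
  have hdetU : IsUnit U.det := (Matrix.isUnit_iff_isUnit_det U).mp hUunit
  have hU1 : U⁻¹ * U = 1 := Matrix.nonsing_inv_mul U hdetU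
  have hU2 : U * U⁻¹ = 1 := Matrix.mul_nonsing_inv U hdetU
  have hcommU : U * N0 = N0 * U := by
    rw [hUdef]
    simp [Matrix.sub_mul, Matrix.mul_sub, Matrix.smul_mul, Matrix.mul_smul]
  have hcomm' : U⁻¹ * N0 = N0 * U⁻¹ := by
    calc U⁻¹ * N0 = U⁻¹ * N0 * (U * U⁻¹) := by rw [hU2, Matrix.mul_one]
    _ = U⁻¹ * (N0 * U) * U⁻¹ := by simp only [Matrix.mul_assoc]
    _ = U⁻¹ * (U * N0) * U⁻¹ := by rw [hcommU]
    _ = N0 * U⁻¹ := by rw [← Matrix.mul_assoc U⁻¹ U N0, hU1, Matrix.one_mul]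
  set N : Matrix (Fin e) (Fin e) ℝ := U⁻¹ * N0 with hNdef
  have hNnil : IsNilpotent N := Commute.isNilpotent_mul_left hcomm' hN0
  set D : Matrix (Fin d ⊕ Fin e) (Fin d ⊕ Fin e) ℝ := Matrix.fromBlocks C⁻¹ 0 0 U⁻¹ with hDdef
  set Dm := D.submatrix ⇑eqv.symm ⇑eqv.symm with hDm
  set S'm := S'.submatrix ⇑eqv.symm _root_.id with hS'm
  set Qm := S.submatrix _root_.id ⇑eqv.symm with hQm
  have key1 : ∀ (Y : Matrix (Fin d ⊕ Fin e) (Fin n) ℝ) (X : Matrix (Fin n) (Fin n) ℝ),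
      Y.submatrix ⇑eqv.symm _root_.id * X = (Y * X).submatrix ⇑eqv.symm _root_.id := by
    intro Y X
    have := Matrix.submatrix_mul_equiv Y X (⇑eqv.symm) (Equiv.refl (Fin n)) _root_.id
    simpa using this
  have key2 : ∀ (Y : Matrix (Fin d ⊕ Fin e) (Fin n) ℝ),
      Y.submatrix ⇑eqv.symm _root_.id * Qm = (Y * S).submatrix ⇑eqv.symm ⇑eqv.symm := by
    intro Y
    have := Matrix.submatrix_mul_equiv Y S (⇑eqv.symm) (Equiv.refl (Fin n)) (⇑eqv.symm)
    simpa using this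
  have key3 : ∀ (Z : Matrix (Fin d ⊕ Fin e) (Fin d ⊕ Fin e) ℝ)
      (Y : Matrix (Fin d ⊕ Fin e) (Fin n) ℝ),
      Z.submatrix ⇑eqv.symm ⇑eqv.symm * Y.submatrix ⇑eqv.symm _root_.id
        = (Z * Y).submatrix ⇑eqv.symm _root_.id :=
    fun Z Y => Matrix.submatrix_mul_equiv Z Y _ eqv.symm _root_.id
  have master : ∀ (X : Matrix (Fin n) (Fin n) ℝ),
      Dm * S'm * X * Qm = (D * S' * X * S).submatrix ⇑eqv.symm ⇑eqv.symm := by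
    intro X
    rw [hDm, hS'm, key3, key1, key2]
  -- invertibility of P and Q
  have hQunit : IsUnit Qm := by
    have h1 : Qm * S'm = 1 := by
      rw [hQm, hS'm]
      have := Matrix.submatrix_mul_equiv S S' _root_.id (eqv.symm) _root_.id
      rw [this, hSS']
      exact Matrix.submatrix_one_equiv (Equiv.refl (Fin n))
    have h2 : S'm * Qm = 1 := by
      rw [key2 S', hS'S]
      exact Matrix.submatrix_one_equiv eqv.symm
    exact ⟨⟨Qm, S'm, h1, h2⟩, rfl⟩
  have hS'munit : IsUnit S'm := by
    have h1 : Qm * S'm = 1 := by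
      rw [hQm, hS'm]
      have := Matrix.submatrix_mul_equiv S S' _root_.id (eqv.symm) _root_.id
      rw [this, hSS']
      exact Matrix.submatrix_one_equiv (Equiv.refl (Fin n))
    have h2 : S'm * Qm = 1 := by
      rw [key2 S', hS'S]
      exact Matrix.submatrix_one_equiv eqv.symm
    exact ⟨⟨S'm, Qm, h2, h1⟩, rfl⟩
  have hDmunit : IsUnit Dm := by
    rw [hDm, Matrix.isUnit_iff_isUnit_det, Matrix.det_submatrix_equiv_self, hDdef,
      Matrix.det_fromBlocks_zero₂₁]
    exact ((Matrix.isUnit_nonsing_inv_det C hdetC).mul (Matrix.isUnit_nonsing_inv_det U hdetU))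
  have hBinvunit : IsUnit (B⁻¹) := ⟨⟨B⁻¹, B, hB1, hB2⟩, rfl⟩
  refine ⟨Dm * S'm * B⁻¹, Qm, (hDmunit.mul hS'munit).mul hBinvunit, hQunit,
    C⁻¹ - lam • 1, N, hNnil, ?_, ?_, fun w hw heq => nilpotent_ode_trivial N hNnil w hw heq⟩
  · -- P E Q
    rw [Matrix.reindex_apply]
    rw [Matrix.mul_assoc (Dm * S'm) B⁻¹ E, master (B⁻¹ * E)]
    have hb2 : S' * (B⁻¹ * (E * S)) = Matrix.fromBlocks C 0 0 N0 := by
      simpa only [Matrix.mul_assoc] using hblock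
    simp only [Matrix.mul_assoc]
    rw [hb2, hDdef]
    simp [Matrix.fromBlocks_multiply, hC1, hNdef]
  · -- P A Q
    rw [Matrix.reindex_apply]
    have hA : A = B - lam • E := by rw [hBdef, add_sub_cancel_left]
    have hPB : Dm * S'm * B⁻¹ * B * Qm = D.submatrix ⇑eqv.symm ⇑eqv.symm := by
      rw [Matrix.mul_assoc (Dm * S'm) B⁻¹ B, hB1, Matrix.mul_one, ← Matrix.mul_one (Dm * S'm),
        Matrix.mul_assoc (Dm * S'm) 1 Qm, ← Matrix.mul_assoc (Dm * S'm) 1 Qm, master 1]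
      rw [Matrix.mul_one, Matrix.mul_assoc D, hS'S, Matrix.mul_one]
    have hPE : Dm * S'm * B⁻¹ * E * Qm
        = (Matrix.fromBlocks 1 0 0 N).submatrix ⇑eqv.symm ⇑eqv.symm := by
      rw [Matrix.mul_assoc (Dm * S'm) B⁻¹ E, master (B⁻¹ * E)]
      have hb2 : S' * (B⁻¹ * (E * S)) = Matrix.fromBlocks C 0 0 N0 := by
        simpa only [Matrix.mul_assoc] using hblock
      simp only [Matrix.mul_assoc]
      rw [hb2, hDdef]
      simp [Matrix.fromBlocks_multiply, hC1, hNdef]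
    have hbr : U⁻¹ - lam • N = 1 := by
      have : U⁻¹ - lam • N = U⁻¹ * (1 - lam • N0) := by
        rw [Matrix.mul_sub, Matrix.mul_one, hNdef, Matrix.mul_smul]
      rw [this, ← hUdef, hU1]
    rw [hA, Matrix.mul_sub, Matrix.sub_mul, Matrix.mul_smul, Matrix.smul_mul, hPB, hPE]
    have : D.submatrix ⇑eqv.symm ⇑eqv.symm
        - lam • (Matrix.fromBlocks 1 0 0 N).submatrix ⇑eqv.symm ⇑eqv.symm
        = (D - lam • Matrix.fromBlocks 1 0 0 N).submatrix ⇑eqv.symm ⇑eqv.symm := rfl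
    have hD2 : D - lam • Matrix.fromBlocks 1 0 0 N
        = Matrix.fromBlocks (C⁻¹ - lam • (1 : Matrix (Fin d) (Fin d) ℝ)) 0 0 1 := by
      rw [hDdef, ← hbr]
      ext (i|i) (j|j) <;> simp [Matrix.sub_apply, Matrix.smul_apply]
    rw [this, hD2]
end

section
/- Let N be a nilpotent n × n real matrix with N^k = 0, and let h : ℝ → ℝⁿ be k-times continuously differentiable. Then the unique solution of N w' + w = h(t) is w(t) = Σ_{i=0}^{k-1} (-1)^i N^i h^{(i)}(t). -/
/-!
Applying `N` to the derivative of the truncated Neumann series `∑ (-1)^i N^i h^{(i)}` shifts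
it by one term, so `N w' + w` telescopes to `h - (-1)^k N^k h^{(k)} = h`. For uniqueness, the
difference `v` of two solutions satisfies `v = -N v'`, hence `N^j v = -(N^{j+1} v)'`; so
`N^{j+1} v ≡ 0` forces `N^j v ≡ 0`, and descending from `N^k = 0` gives `v ≡ 0`.
-/

open Finset

namespace ContinuousLinearMap

variable {𝕜 E : Type*} [NontriviallyNormedField 𝕜] [NormedAddCommGroup E] [NormedSpace 𝕜 E]
  (L : E →L[𝕜] E)

/-- The Neumann series of `(1 + L d/dt)⁻¹` applied to `h`, truncated after `k` terms. -/
noncomputable def neumannSolution (k : ℕ) (h : 𝕜 → E) (t : 𝕜) : E :=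
  ∑ i ∈ range k, (-1 : 𝕜) ^ i • (L ^ i) (iteratedDeriv i h t)

variable {L}

theorem hasDerivAt_neumannSolution {k : ℕ} {h : 𝕜 → E} (hh : ContDiff 𝕜 k h) (t : 𝕜) :
    HasDerivAt (L.neumannSolution k h)
      (∑ i ∈ range k, (-1 : 𝕜) ^ i • (L ^ i) (iteratedDeriv (i + 1) h t)) t := by
  refine HasDerivAt.fun_sum fun i hi => ?_
  have hdiff := hh.differentiable_iteratedDeriv i (by exact_mod_cast mem_range.mp hi)
  rw [iteratedDeriv_succ]
  exact ((L ^ i).hasFDerivAt.comp_hasDerivAt t (hdiff t).hasDerivAt).const_smul _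

theorem differentiable_neumannSolution {k : ℕ} {h : 𝕜 → E} (hh : ContDiff 𝕜 k h) :
    Differentiable 𝕜 (L.neumannSolution k h) :=
  fun t => (hasDerivAt_neumannSolution hh t).differentiableAt

theorem apply_deriv_neumannSolution_add {k : ℕ} {h : 𝕜 → E} (hh : ContDiff 𝕜 k h) (t : 𝕜) :
    L (deriv (L.neumannSolution k h) t) + L.neumannSolution k h t
      = h t - (-1 : 𝕜) ^ k • (L ^ k) (iteratedDeriv k h t) := by
  set g : ℕ → E := fun i => (-1 : 𝕜) ^ i • (L ^ i) (iteratedDeriv i h t)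
  have hshift : ∀ i, L ((-1 : 𝕜) ^ i • (L ^ i) (iteratedDeriv (i + 1) h t)) = -g (i + 1) := by
    intro i
    simp only [g, map_smul, ← mul_apply_eq_comp, ← pow_succ', pow_succ (-1 : 𝕜), mul_neg_one,
      neg_smul, neg_neg]
  rw [(hasDerivAt_neumannSolution hh t).deriv, map_sum, neumannSolution, ← sum_add_distrib]
  simp only [hshift, neg_add_eq_sub]
  rw [sum_range_sub']
  simp

theorem pow_apply_eq_zero_of_pow_succ_apply_eq_zero {v : 𝕜 → E} (hv : Differentiable 𝕜 v)
    (hLv : ∀ t, L (deriv v t) + v t = 0) {j : ℕ} (hj : ∀ t, (L ^ (j + 1)) (v t) = 0) (t : 𝕜) :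
    (L ^ j) (v t) = 0 := by
  have hderiv : HasDerivAt (fun s => (L ^ (j + 1)) (v s)) ((L ^ (j + 1)) (deriv v t)) t :=
    (L ^ (j + 1)).hasFDerivAt.comp_hasDerivAt t (hv t).hasDerivAt
  have hzero : (L ^ (j + 1)) (deriv v t) = 0 := by
    simpa only [hj, deriv_const'] using hderiv.deriv.symm
  rw [eq_neg_of_add_eq_zero_right (hLv t), map_neg, ← mul_apply_eq_comp, ← pow_succ, hzero,
    neg_zero]

theorem eq_zero_of_apply_deriv_add_eq_zero {k : ℕ} (hL : L ^ k = 0) {v : 𝕜 → E}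
    (hv : Differentiable 𝕜 v) (hLv : ∀ t, L (deriv v t) + v t = 0) : v = 0 := by
  have hpow : ∀ j ≤ k, ∀ t, (L ^ j) (v t) = 0 := fun j hj =>
    Nat.decreasingInduction (motive := fun j _ => ∀ t, (L ^ j) (v t) = 0)
      (fun _ _ ih => pow_apply_eq_zero_of_pow_succ_apply_eq_zero hv hLv ih)
      (by simp [hL]) hj
  funext t
  simpa using hpow 0 k.zero_le t

theorem apply_deriv_add_eq_iff_eq_neumannSolution {k : ℕ} (hL : L ^ k = 0) {h : 𝕜 → E}
    (hh : ContDiff 𝕜 k h) (w : 𝕜 → E) :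
    (Differentiable 𝕜 w ∧ ∀ t, L (deriv w t) + w t = h t) ↔ w = L.neumannSolution k h := by
  have hsol : ∀ t, L (deriv (L.neumannSolution k h) t) + L.neumannSolution k h t = h t := by
    simp [apply_deriv_neumannSolution_add hh, hL]
  constructor
  · rintro ⟨hw, hwh⟩
    have hS := differentiable_neumannSolution (L := L) hh
    rw [← sub_eq_zero]
    refine eq_zero_of_apply_deriv_add_eq_zero hL (hw.sub hS) fun t => ?_
    rw [deriv_sub (hw t) (hS t), map_sub, Pi.sub_apply, sub_add_sub_comm, hwh, hsol, sub_self]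
  · rintro rfl
    exact ⟨differentiable_neumannSolution hh, hsol⟩

end ContinuousLinearMap

theorem Matrix.toContinuousLinearMap_toLin'_pow_apply {𝕜 ι : Type*} [NontriviallyNormedField 𝕜]
    [CompleteSpace 𝕜] [Fintype ι] [DecidableEq ι] (N : Matrix ι ι 𝕜) (i : ℕ) (x : ι → 𝕜) :
    (LinearMap.toContinuousLinearMap (Matrix.toLin' N) ^ i) x = (N ^ i).mulVec x := by
  induction i generalizing x with
  | zero => simp
  | succ i ih => rw [pow_succ, mul_apply_eq_comp, ih, pow_succ, ← Matrix.mulVec_mulVec]; rfl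

/-- The nilpotent subsystem `N w' + w = h(t)` with `N^k = 0` and `h` k-times
continuously differentiable has the unique solution
`w(t) = ∑_{i=0}^{k-1} (-1)^i N^i h^{(i)}(t)`. -/
theorem nilpotent_DAE_unique_solution (n k : ℕ)
    (N : Matrix (Fin n) (Fin n) ℝ) (hN : N ^ k = 0)
    (h : ℝ → Fin n → ℝ) (hh : ContDiff ℝ k h)
    (w : ℝ → Fin n → ℝ) :
    (Differentiable ℝ w ∧ ∀ t, N.mulVec (deriv w t) + w t = h t) ↔
      w = fun t => ∑ i ∈ Finset.range k,
        ((-1 : ℝ) ^ i • (N ^ i).mulVec (iteratedDeriv i h t)) := by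
  set L := LinearMap.toContinuousLinearMap (Matrix.toLin' N)
  have hpow := N.toContinuousLinearMap_toLin'_pow_apply
  have hL : L ^ k = 0 := ContinuousLinearMap.ext fun x => by simp [L, hpow, hN]
  simpa only [L, hpow, ContinuousLinearMap.neumannSolution, LinearMap.coe_toContinuousLinearMap',
    Matrix.toLin'_apply, funext_iff] using L.apply_deriv_add_eq_iff_eq_neumannSolution hL hh w
end

section
/- Let A = [A_C | A_L | A_R | A_V | A_I] be the reduced incidence matrix of a connected circuit graph partitioned by element type. If A_V has linearly independent columns and [A_C | A_R | A_V] has full row rank, then the matrix [[A_C C A_Cᵀ + A_R G A_Rᵀ, A_V],[A_Vᵀ, 0]] is invertible for symmetric positive definite C and G. -/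
open Matrix

lemma quad_eq (n m : ℕ) (A : Matrix (Fin n) (Fin m) ℝ) (C : Matrix (Fin m) (Fin m) ℝ)
    (x : Fin n → ℝ) :
    x ⬝ᵥ ((A * C * A.transpose) *ᵥ x) = (A.transpose *ᵥ x) ⬝ᵥ (C *ᵥ (A.transpose *ᵥ x)) := by
  rw [← Matrix.mulVec_mulVec, ← Matrix.mulVec_mulVec, Matrix.dotProduct_mulVec,
    ← Matrix.mulVec_transpose]

/-- Well-posedness lemma of MNA: if the voltage-source incidence block `A_V`
has linearly independent columns (no loops of voltage sources) and
`[A_C | A_R | A_V]` has full row rank (no cutsets of current sources), then the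
bordered MNA matrix `[[A_C C A_Cᵀ + A_R G A_Rᵀ, A_V],[A_Vᵀ, 0]]` is invertible
for symmetric positive definite `C` and `G`. -/
theorem mna_bordered_matrix_invertible (n c r v : ℕ)
    (A_C : Matrix (Fin n) (Fin c) ℝ) (A_R : Matrix (Fin n) (Fin r) ℝ)
    (A_V : Matrix (Fin n) (Fin v) ℝ)
    (hV : LinearIndependent ℝ (fun j : Fin v => fun i => A_V i j))
    (hrank : ∀ x : Fin n → ℝ, A_C.transpose.mulVec x = 0 →
      A_R.transpose.mulVec x = 0 → A_V.transpose.mulVec x = 0 → x = 0)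
    (C : Matrix (Fin c) (Fin c) ℝ) (G : Matrix (Fin r) (Fin r) ℝ)
    (hC : C.PosDef) (hG : G.PosDef) :
    IsUnit (Matrix.fromBlocks
      (A_C * C * A_C.transpose + A_R * G * A_R.transpose) A_V
      A_V.transpose 0) := by
  set M := A_C * C * A_C.transpose + A_R * G * A_R.transpose with hM
  rw [Matrix.isUnit_iff_isUnit_det, isUnit_iff_ne_zero]
  intro hdet
  obtain ⟨w, hw0, hw⟩ := (Matrix.exists_mulVec_eq_zero_iff).2 hdet
  set x : Fin n → ℝ := fun i => w (Sum.inl i)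
  set y : Fin v → ℝ := fun j => w (Sum.inr j)
  have hweq : w = Sum.elim x y := by
    funext i; cases i <;> rfl
  rw [hweq, Matrix.fromBlocks_mulVec] at hw
  have h1 : M *ᵥ x + A_V *ᵥ y = 0 := by
    funext i; exact congrFun hw (Sum.inl i)
  have h2 : A_V.transpose *ᵥ x = 0 := by
    have := funext (fun j => congrFun hw (Sum.inr j))
    simp [Matrix.zero_mulVec] at this
    exact this
  -- quadratic form vanishes
  have hq : x ⬝ᵥ (M *ᵥ x) = 0 := by
    have : x ⬝ᵥ (M *ᵥ x + A_V *ᵥ y) = 0 := by rw [h1, dotProduct_zero]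
    rw [dotProduct_add] at this
    have hxv : x ⬝ᵥ (A_V *ᵥ y) = 0 := by
      rw [Matrix.dotProduct_mulVec, ← Matrix.mulVec_transpose, h2, zero_dotProduct]
    linarith
  have hqC : x ⬝ᵥ ((A_C * C * A_C.transpose) *ᵥ x)
      = (A_C.transpose *ᵥ x) ⬝ᵥ (C *ᵥ (A_C.transpose *ᵥ x)) := quad_eq n c A_C C x
  have hqG : x ⬝ᵥ ((A_R * G * A_R.transpose) *ᵥ x)
      = (A_R.transpose *ᵥ x) ⬝ᵥ (G *ᵥ (A_R.transpose *ᵥ x)) := quad_eq n r A_R G x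
  have hsum : (A_C.transpose *ᵥ x) ⬝ᵥ (C *ᵥ (A_C.transpose *ᵥ x))
      + (A_R.transpose *ᵥ x) ⬝ᵥ (G *ᵥ (A_R.transpose *ᵥ x)) = 0 := by
    rw [← hqC, ← hqG, ← dotProduct_add, ← Matrix.add_mulVec, ← hM]
    exact hq
  have hCnn := hC.posSemidef.dotProduct_mulVec_nonneg (A_C.transpose *ᵥ x)
  have hGnn := hG.posSemidef.dotProduct_mulVec_nonneg (A_R.transpose *ᵥ x)
  simp only [RCLike.re_to_real, star_trivial] at hCnn hGnn
  have hCx : A_C.transpose *ᵥ x = 0 := by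
    by_contra h
    have := hC.dotProduct_mulVec_pos (x := A_C.transpose *ᵥ x) h
    simp only [star_trivial] at this
    linarith
  have hRx : A_R.transpose *ᵥ x = 0 := by
    by_contra h
    have := hG.dotProduct_mulVec_pos (x := A_R.transpose *ᵥ x) h
    simp only [star_trivial] at this
    linarith
  have hx0 : x = 0 := hrank x hCx hRx h2
  have hAVy : A_V *ᵥ y = 0 := by
    have : M *ᵥ x = 0 := by rw [hx0, Matrix.mulVec_zero]
    rw [this, zero_add] at h1
    exact h1
  have hy0 : y = 0 := by
    have := Fintype.linearIndependent_iff.1 hV y ?_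
    · funext j; exact this j
    · funext i
      simpa [Matrix.mulVec, dotProduct, mul_comm] using congrFun hAVy i
  apply hw0
  rw [hweq, hx0, hy0]
  funext i; cases i <;> rfl
end
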